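/- arXiv:1807.06106 — 3 statements merged into one kernel-verified Lean document; each statement's English description precedes it below -/
import Mathlib

section
/- For every Markov chain P on finite nonempty state type S and every target set T ⊆ S, the limit reachability probabilities r∞ s = ⨆_{n ∈ ℕ} r n s exist (the supremum is over a monotone bounded sequence) and satisfy the Bellman fixed-point equations: r∞ s = 1 for every s ∈ T, and r∞ s = ∑_{s' ∈ S} P s s' * r∞ s' for every s ∉ T. -/
/-- Bounded-horizon reachability values of a Markov chain `P` w.r.t. target set `T`. -/
def reachVal {S : Type*} [Fintype S] (P : S → S → ℝ) (T : Set S) [DecidablePred (· ∈ T)] :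
    ℕ → S → ℝ
  | 0, s => if s ∈ T then 1 else 0
  | n + 1, s => if s ∈ T then 1 else ∑ s', P s s' * reachVal P T n s'

/-! The values `reachVal P T n s` increase with `n` and stay below `1`, so they converge to their
supremum; since the recursion off `T` is a finite sum, it passes to the limit and yields the
Bellman equation. -/

open Filter Topology

namespace reachVal

variable {S : Type*} [Fintype S] {P : S → S → ℝ} {T : Set S} [DecidablePred (· ∈ T)]

theorem of_mem {s : S} (hs : s ∈ T) (n : ℕ) : reachVal P T n s = 1 := by
  cases n <;> simp [reachVal, hs]

theorem succ_of_not_mem {s : S} (hs : s ∉ T) (n : ℕ) :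
    reachVal P T (n + 1) s = ∑ s', P s s' * reachVal P T n s' := by
  simp [reachVal, hs]

theorem nonneg (hP0 : ∀ s s', 0 ≤ P s s') (n : ℕ) (s : S) : 0 ≤ reachVal P T n s := by
  induction n generalizing s with
  | zero => unfold reachVal; split <;> norm_num
  | succ n ih =>
    unfold reachVal
    split
    · norm_num
    · exact Finset.sum_nonneg fun s' _ => mul_nonneg (hP0 s s') (ih s')

theorem le_one (hP0 : ∀ s s', 0 ≤ P s s') (hP1 : ∀ s, ∑ s', P s s' ≤ 1) (n : ℕ) (s : S) :
    reachVal P T n s ≤ 1 := by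
  induction n generalizing s with
  | zero => unfold reachVal; split <;> norm_num
  | succ n ih =>
    unfold reachVal
    split
    · rfl
    · calc ∑ s', P s s' * reachVal P T n s' ≤ ∑ s', P s s' * 1 := by
            gcongr with s'
            · exact hP0 s s'
            · exact ih s'
        _ ≤ 1 := by simpa using hP1 s

theorem monotone (hP0 : ∀ s s', 0 ≤ P s s') : Monotone (reachVal P T) := by
  refine monotone_nat_of_le_succ fun n s => ?_
  induction n generalizing s with
  | zero =>
    unfold reachVal
    split
    · rfl
    · exact Finset.sum_nonneg fun s' _ => mul_nonneg (hP0 s s') (nonneg hP0 0 s')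
  | succ n ih =>
    unfold reachVal
    split
    · rfl
    · gcongr with s'
      · exact hP0 s s'
      · exact ih s'

end reachVal

theorem reachVal_iSup_bellman_general
    {S : Type*} [Fintype S]
    (P : S → S → ℝ)
    (hP0 : ∀ s s', 0 ≤ P s s')
    (hP1 : ∀ s, ∑ s', P s s' = 1)
    (T : Set S) [DecidablePred (· ∈ T)] :
    (∀ s, Monotone fun n => reachVal P T n s) ∧
    (∀ s, BddAbove (Set.range fun n => reachVal P T n s)) ∧
    (∀ s ∈ T, (⨆ n, reachVal P T n s) = 1) ∧
    (∀ s ∉ T, (⨆ n, reachVal P T n s) = ∑ s', P s s' * ⨆ n, reachVal P T n s') := by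
  have hmono : ∀ s, Monotone fun n => reachVal P T n s := fun s =>
    (Function.monotone_eval s).comp (reachVal.monotone hP0)
  have hbdd : ∀ s, BddAbove (Set.range fun n => reachVal P T n s) := fun s =>
    ⟨1, Set.forall_mem_range.2 fun n => reachVal.le_one hP0 (fun s => (hP1 s).le) n s⟩
  have hlim : ∀ s, Tendsto (fun n => reachVal P T n s) atTop (𝓝 (⨆ n, reachVal P T n s)) :=
    fun s => tendsto_atTop_ciSup (hmono s) (hbdd s)
  refine ⟨hmono, hbdd, fun s hs => by simp [reachVal.of_mem hs], fun s hs => ?_⟩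
  -- Both sides are limits of `reachVal P T (n + 1) s`.
  have hsum : Tendsto (fun n => reachVal P T (n + 1) s) atTop
      (𝓝 (∑ s', P s s' * ⨆ n, reachVal P T n s')) := by
    simp only [reachVal.succ_of_not_mem hs]
    exact tendsto_finsetSum _ fun s' _ => (hlim s').const_mul (P s s')
  exact tendsto_nhds_unique ((hlim s).comp (tendsto_add_atTop_nat 1)) hsum

/-- The limit reachability probabilities `r∞ s = ⨆ n, r n s` exist (the supremum
is over a monotone bounded sequence) and satisfy the Bellman fixed-point equations:
`r∞ s = 1` on `T` and `r∞ s = ∑ s', P s s' * r∞ s'` off `T`. -/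
theorem reachVal_iSup_bellman
    {S : Type*} [Fintype S] [Nonempty S]
    (P : S → S → ℝ)
    (hP0 : ∀ s s', 0 ≤ P s s')
    (hP1 : ∀ s, ∑ s', P s s' = 1)
    (T : Set S) [DecidablePred (· ∈ T)] :
    (∀ s, Monotone fun n => reachVal P T n s) ∧
    (∀ s, BddAbove (Set.range fun n => reachVal P T n s)) ∧
    (∀ s ∈ T, (⨆ n, reachVal P T n s) = 1) ∧
    (∀ s ∉ T, (⨆ n, reachVal P T n s) = ∑ s', P s s' * ⨆ n, reachVal P T n s') :=
  reachVal_iSup_bellman_general P hP0 hP1 T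
end

section
/- Let P be a Markov chain on finite nonempty state type S and T ⊆ S. Suppose v : S → ℝ satisfies v s ≥ 0 for all s, v s = 1 for all s ∈ T, and v s ≥ ∑_{s' ∈ S} P s s' * v s' for all s ∉ T. Then r n s ≤ v s for every n ∈ ℕ and every s ∈ S; consequently, the limit reachability probability ⨆_n r n s is at most v s. In other words, every nonnegative superharmonic vector that equals 1 on the target states is an upper bound on the reachability probabilities, which is the soundness of the reachability constraints in the linear-programming characterization. -/
/-! Induction on the horizon: `v` dominates `r 0` because `v ≥ 0` and `v = 1` on `T`, and the
one-step operator `r ↦ P r` is monotone because `P ≥ 0`, so superharmonicity of `v` carries the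
bound from `r n` to `r (n + 1)`. -/

section

variable {S : Type*} [Fintype S] {P : S → S → ℝ} {T : Set S} [DecidablePred (· ∈ T)] {s : S}

theorem reachVal_of_mem (hs : s ∈ T) (n : ℕ) : reachVal P T n s = 1 := by
  cases n <;> simp [reachVal, hs]

theorem reachVal_zero_of_notMem (hs : s ∉ T) : reachVal P T 0 s = 0 := by
  simp [reachVal, hs]

theorem reachVal_succ_of_notMem (hs : s ∉ T) (n : ℕ) :
    reachVal P T (n + 1) s = ∑ s', P s s' * reachVal P T n s' := by
  simp [reachVal, hs]

theorem reachVal_le_of_superharmonic (hP0 : ∀ s s', 0 ≤ P s s') {v : S → ℝ}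
    (hv0 : ∀ s, 0 ≤ v s) (hvT : ∀ s ∈ T, v s = 1)
    (hvsup : ∀ s ∉ T, ∑ s', P s s' * v s' ≤ v s) (n : ℕ) (s : S) :
    reachVal P T n s ≤ v s := by
  induction n generalizing s with
  | zero =>
    by_cases hs : s ∈ T
    · exact (reachVal_of_mem hs 0).trans_le (hvT s hs).ge
    · exact (reachVal_zero_of_notMem hs).trans_le (hv0 s)
  | succ n ih =>
    by_cases hs : s ∈ T
    · exact (reachVal_of_mem hs _).trans_le (hvT s hs).ge
    calc reachVal P T (n + 1) s = ∑ s', P s s' * reachVal P T n s' := reachVal_succ_of_notMem hs n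
      _ ≤ ∑ s', P s s' * v s' :=
        Finset.sum_le_sum fun s' _ => mul_le_mul_of_nonneg_left (ih s') (hP0 s s')
      _ ≤ v s := hvsup s hs

end

theorem superharmonic_upper_bound_reach_general
    {S : Type*} [Fintype S]
    (P : S → S → ℝ)
    (hP0 : ∀ s s', 0 ≤ P s s')
    (T : Set S) [DecidablePred (· ∈ T)]
    (v : S → ℝ)
    (hv0 : ∀ s, 0 ≤ v s)
    (hvT : ∀ s ∈ T, v s = 1)
    (hvsup : ∀ s ∉ T, (∑ s', P s s' * v s') ≤ v s) :
    (∀ (n : ℕ) (s : S), reachVal P T n s ≤ v s) ∧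
    (∀ s : S, (⨆ n, reachVal P T n s) ≤ v s) := by
  have hbound := reachVal_le_of_superharmonic hP0 hv0 hvT hvsup
  exact ⟨hbound, fun s => ciSup_le fun n => hbound n s⟩

/-- Every nonnegative superharmonic vector that equals 1 on the target states is
an upper bound on the (bounded-horizon and limit) reachability probabilities. -/
theorem superharmonic_upper_bound_reach
    {S : Type*} [Fintype S] [Nonempty S]
    (P : S → S → ℝ)
    (hP0 : ∀ s s', 0 ≤ P s s')
    (hP1 : ∀ s, ∑ s', P s s' = 1)
    (T : Set S) [DecidablePred (· ∈ T)]
    (v : S → ℝ)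
    (hv0 : ∀ s, 0 ≤ v s)
    (hvT : ∀ s ∈ T, v s = 1)
    (hvsup : ∀ s ∉ T, (∑ s', P s s' * v s') ≤ v s) :
    (∀ (n : ℕ) (s : S), reachVal P T n s ≤ v s) ∧
    (∀ s : S, (⨆ n, reachVal P T n s) ≤ v s) :=
  superharmonic_upper_bound_reach_general P hP0 T v hv0 hvT hvsup
end

section
/- The Johnson-criterion task-success probability P is strictly increasing on (0, ∞): for all real numbers 0 < s < t, P(s) < P(t). (Equivalently, increasing the number of line pairs across an object strictly increases the estimated probability of successful visual analysis.) -/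
/-! Writing `t ^ x(t) = exp ((2.7 + 0.7 t) log t)` and `P = u / (1 + u)` with `u = t ^ x(t)`, it
suffices that `(a + b t) log t` increases on `(0, ∞)` when `0 < b ≤ a`. Its derivative is
`b log t + a / t + b`, and `log t ≥ 1 - 1 / t` bounds it below by `2 b + (a - b) / t > 0`. -/

open Real Set

lemma strictMonoOn_div_one_add : StrictMonoOn (fun u : ℝ => u / (1 + u)) (Ioi (-1)) := by
  intro u (hu : -1 < u) v (hv : -1 < v) huv
  rw [div_lt_div_iff₀ (by linarith) (by linarith)]
  linarith

lemma strictMonoOn_affine_mul_log {a b : ℝ} (hb : 0 < b) (hba : b ≤ a) :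
    StrictMonoOn (fun t : ℝ => (a + b * t) * log t) (Ioi 0) := by
  apply strictMonoOn_of_deriv_pos (convex_Ioi 0)
  · exact (continuous_const.add (continuous_const.mul continuous_id)).continuousOn.mul
      (continuousOn_log.mono fun t ht => (mem_Ioi.mp ht).ne')
  · intro t ht
    rw [interior_Ioi, mem_Ioi] at ht
    have hderiv : HasDerivAt (fun t : ℝ => (a + b * t) * log t)
        (b * log t + (a + b * t) * t⁻¹) t := by
      have hline : HasDerivAt (fun t : ℝ => a + b * t) b t := by
        simpa using ((hasDerivAt_id t).const_mul b).const_add a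
      exact hline.mul (hasDerivAt_log ht.ne')
    rw [hderiv.deriv]
    have hlog : b * (1 - t⁻¹) ≤ b * log t :=
      mul_le_mul_of_nonneg_left (one_sub_inv_le_log_of_pos ht) hb.le
    have hlower : b * (1 - t⁻¹) + (a + b * t) * t⁻¹ = 2 * b + (a - b) * t⁻¹ := by
      field_simp
      ring
    have hinv : 0 ≤ (a - b) * t⁻¹ := mul_nonneg (by linarith) (inv_pos.mpr ht).le
    linarith

lemma strictMonoOn_rpow_affine {a b : ℝ} (hb : 0 < b) (hba : b ≤ a) :
    StrictMonoOn (fun t : ℝ => t ^ (a + b * t)) (Ioi 0) := by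
  intro s (hs : 0 < s) t (ht : 0 < t) hst
  simp only [rpow_def_of_pos hs, rpow_def_of_pos ht, exp_lt_exp, mul_comm (log _)]
  exact strictMonoOn_affine_mul_log hb hba hs ht hst

/-- The Johnson-criterion task-success probability
`P(t) = t^(2.7 + 0.7 t) / (1 + t^(2.7 + 0.7 t))` is strictly increasing on `(0, ∞)`. -/
theorem johnson_criterion_strictMono
    (J : ℝ → ℝ)
    (hJ : ∀ t : ℝ, J t = t ^ ((2.7 : ℝ) + 0.7 * t) / (1 + t ^ ((2.7 : ℝ) + 0.7 * t))) :
    ∀ s t : ℝ, 0 < s → s < t → J s < J t := by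
  intro s t hs hst
  have ht : 0 < t := hs.trans hst
  have hpow : s ^ ((2.7 : ℝ) + 0.7 * s) < t ^ ((2.7 : ℝ) + 0.7 * t) :=
    strictMonoOn_rpow_affine (by norm_num) (by norm_num) hs ht hst
  have hpos : ∀ u : ℝ, 0 < u → u ^ ((2.7 : ℝ) + 0.7 * u) ∈ Ioi (-1) := fun u hu =>
    mem_Ioi.mpr ((rpow_pos_of_pos hu _).trans' (by norm_num))
  rw [hJ s, hJ t]
  exact strictMonoOn_div_one_add (hpos s hs) (hpos t ht) hpow
end
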